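/- arXiv:1502.05790 — 3 statements merged into one kernel-verified Lean document; each statement's English description precedes it below -/
import Mathlib

section
/- The operator Sing, defined on functions f : (0,1) → W admitting an asymptotic expansion Σ gᵢ(ε)Ψᵢ by Sing(f) := Σ_{i=0}^{N} T(gᵢ)Ψᵢ (where N is chosen so that gₙ(ε) → 0 as ε → 0 for all n ≥ N and T is projection onto the purely singular part of a fixed decomposition C^∞(0,1) = C^∞_Sing(0,1) ⊕ C^∞₀(0,1)), is well-defined: its value does not depend on the choice of N nor on the choice of asymptotic expansion for f. -/
open Filter Set

/-- `AsympData f g Ψ` records that the function `f : (0,1) → W` admits the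
small-`ε` asymptotic expansion `f(ε) ≃ Σᵢ gᵢ(ε) Ψᵢ`, where the `gᵢ` are smooth
functions on `(0,1)` with finite order poles at zero: there is a nondecreasing
sequence `dₙ ∈ ℤ` tending to infinity such that for all `n`,
`lim_{ε→0} ε^{-dₙ} (f(ε) − Σ_{i=0}^n gᵢ(ε) Ψᵢ) = 0`. -/
structure AsympData (W : Type*) [AddCommGroup W] [Module ℝ W] [TopologicalSpace W]
    (f : ℝ → W) (g : ℕ → ℝ → ℝ) (Ψ : ℕ → W) : Prop where
  smooth : ∀ i, ContDiffOn ℝ (⊤ : ℕ∞) (g i) (Ioo 0 1)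
  pole : ∀ i, ∃ k : ℕ,
    Tendsto (fun ε => ε ^ k * g i ε) (nhdsWithin 0 (Ioo 0 1)) (nhds (0 : ℝ))
  expansion : ∃ d : ℕ → ℤ, Monotone d ∧ Tendsto d atTop atTop ∧ ∀ n,
    Tendsto (fun ε : ℝ => (ε ^ (-(d n)) : ℝ) • (f ε - ∑ i ∈ Finset.range (n + 1), g i ε • Ψ i))
      (nhdsWithin 0 (Ioo 0 1)) (nhds (0 : W))

/-- A renormalization scheme: a decomposition
`C^∞(0,1) = C^∞_Sing(0,1) ⊕ C^∞₀(0,1)` of the smooth functions on `(0,1)` into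
the subspace of functions admitting a limit at `0` and a complementary
subspace of purely singular functions, encoded by the linear projection `T`
onto the singular summand. -/
structure RenormScheme where
  T : (ℝ → ℝ) →ₗ[ℝ] (ℝ → ℝ)
  smooth_T : ∀ g : ℝ → ℝ, ContDiffOn ℝ (⊤ : ℕ∞) g (Ioo 0 1) → ContDiffOn ℝ (⊤ : ℕ∞) (T g) (Ioo 0 1)
  idem : ∀ g : ℝ → ℝ, T (T g) = T g
  compl : ∀ g : ℝ → ℝ, ContDiffOn ℝ (⊤ : ℕ∞) g (Ioo 0 1) →
    ∃ c : ℝ, Tendsto (fun ε => g ε - T g ε) (nhdsWithin 0 (Ioo 0 1)) (nhds c)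
  zero_iff : ∀ g : ℝ → ℝ, ContDiffOn ℝ (⊤ : ℕ∞) g (Ioo 0 1) →
    (T g = 0 ↔ ∃ c : ℝ, Tendsto g (nhdsWithin 0 (Ioo 0 1)) (nhds c))

lemma tendsto_sub_partial {W : Type*} [AddCommGroup W] [Module ℝ W] [TopologicalSpace W]
    [IsTopologicalAddGroup W] [ContinuousSMul ℝ W]
    {f : ℝ → W} {g : ℕ → ℝ → ℝ} {Ψ : ℕ → W} {N : ℕ}
    (hexp : ∃ d : ℕ → ℤ, Monotone d ∧ Tendsto d atTop atTop ∧ ∀ n,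
      Tendsto (fun ε : ℝ => (ε ^ (-(d n)) : ℝ) • (f ε - ∑ i ∈ Finset.range (n + 1), g i ε • Ψ i))
        (nhdsWithin 0 (Ioo 0 1)) (nhds (0 : W)))
    (hN : ∀ n ≥ N, Tendsto (g n) (nhdsWithin 0 (Ioo 0 1)) (nhds (0 : ℝ))) :
    Tendsto (fun ε => f ε - ∑ i ∈ Finset.range (N + 1), g i ε • Ψ i)
      (nhdsWithin 0 (Ioo 0 1)) (nhds (0 : W)) := by
  obtain ⟨d, hmono, htop, hexp⟩ := hexp
  obtain ⟨n0, hn0⟩ := (htop.eventually_ge_atTop 0).exists_forall_of_atTop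
  set n := max n0 N with hn
  have hdn : 0 ≤ d n := hn0 n (le_max_left _ _)
  have hnN : N ≤ n := le_max_right _ _
  set k := (d n).toNat with hk
  have hkd : (k : ℤ) = d n := Int.toNat_of_nonneg hdn
  -- f - S_n → 0
  have h1 : Tendsto (fun ε => f ε - ∑ i ∈ Finset.range (n + 1), g i ε • Ψ i)
      (nhdsWithin 0 (Ioo 0 1)) (nhds (0 : W)) := by
    have hpow : Tendsto (fun ε : ℝ => ε ^ k) (nhdsWithin 0 (Ioo 0 1)) (nhds ((0:ℝ) ^ k)) :=
      ((continuous_pow k).tendsto 0).mono_left nhdsWithin_le_nhds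
    have h2 := hpow.smul (hexp n)
    rw [smul_zero] at h2
    refine h2.congr' ?_
    filter_upwards [self_mem_nhdsWithin] with ε hε
    have hε0 : ε ≠ 0 := ne_of_gt hε.1
    rw [smul_smul, ← zpow_natCast ε k, ← zpow_add₀ hε0, hkd, add_neg_cancel, zpow_zero, one_smul]
  -- tail → 0
  have h2 : Tendsto (fun ε => ∑ i ∈ Finset.Ico (N + 1) (n + 1), g i ε • Ψ i)
      (nhdsWithin 0 (Ioo 0 1)) (nhds (0 : W)) := by
    have : Tendsto (fun ε => ∑ i ∈ Finset.Ico (N + 1) (n + 1), g i ε • Ψ i)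
        (nhdsWithin 0 (Ioo 0 1)) (nhds (∑ i ∈ Finset.Ico (N + 1) (n + 1), (0:ℝ) • Ψ i)) := by
      refine tendsto_finset_sum _ fun i hi => ?_
      exact (hN i (le_of_lt (Nat.lt_of_succ_le (Finset.mem_Ico.1 hi).1))).smul_const (Ψ i)
    simpa using this
  have h3 := h1.add h2
  rw [add_zero] at h3
  refine h3.congr fun ε => ?_
  have : ∑ i ∈ Finset.range (n + 1), g i ε • Ψ i =
      ∑ i ∈ Finset.range (N + 1), g i ε • Ψ i + ∑ i ∈ Finset.Ico (N + 1) (n + 1), g i ε • Ψ i := by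
    simp only [Finset.range_eq_Ico]
    exact (Finset.sum_Ico_consecutive _ (Nat.zero_le _) (Nat.succ_le_succ hnN)).symm
  rw [this]; abel

/-- **Well-definedness of the singular part `Sing`.** Fix a renormalization
scheme with singular projection `T`. If `f : (0,1) → W` admits two asymptotic
expansions `Σ gᵢ(ε) Ψᵢ` and `Σ g'ᵢ(ε) Ψ'ᵢ`, and `N`, `N'` are such that
`gₙ → 0` for `n ≥ N` and `g'ₙ → 0` for `n ≥ N'`, then the corresponding
singular parts agree on `(0,1)`:
`Σ_{i=0}^{N} T(gᵢ)(ε) Ψᵢ = Σ_{i=0}^{N'} T(g'ᵢ)(ε) Ψ'ᵢ`; i.e. `Sing f` depends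
neither on the choice of `N` nor on the choice of expansion. -/
theorem statement_2 (W : Type*) [AddCommGroup W] [Module ℝ W] [TopologicalSpace W]
    [IsTopologicalAddGroup W] [ContinuousSMul ℝ W] [T2Space W] [LocallyConvexSpace ℝ W]
    (R : RenormScheme) (f : ℝ → W) (g g' : ℕ → ℝ → ℝ) (Ψ Ψ' : ℕ → W) (N N' : ℕ)
    (h : AsympData W f g Ψ) (h' : AsympData W f g' Ψ')
    (hN : ∀ n ≥ N, Tendsto (g n) (nhdsWithin 0 (Ioo 0 1)) (nhds (0 : ℝ)))
    (hN' : ∀ n ≥ N', Tendsto (g' n) (nhdsWithin 0 (Ioo 0 1)) (nhds (0 : ℝ))) :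
    ∀ ε ∈ Ioo (0 : ℝ) 1,
      ∑ i ∈ Finset.range (N + 1), R.T (g i) ε • Ψ i =
      ∑ i ∈ Finset.range (N' + 1), R.T (g' i) ε • Ψ' i := by
  intro ε _
  by_contra hne
  obtain ⟨φ, hφ⟩ := SeparatingDual.exists_separating_of_ne (R := ℝ) hne
  have hA := tendsto_sub_partial h.expansion hN
  have hB := tendsto_sub_partial h'.expansion hN'
  have hF : Tendsto (fun x => ∑ i ∈ Finset.range (N + 1), g i x • Ψ i
      - ∑ i ∈ Finset.range (N' + 1), g' i x • Ψ' i) (nhdsWithin 0 (Ioo 0 1)) (nhds (0 : W)) := by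
    have h3 := hB.sub hA
    rw [sub_zero] at h3
    exact h3.congr fun x => by abel
  set q : ℝ → ℝ := fun x => ∑ i ∈ Finset.range (N + 1), g i x * φ (Ψ i)
      - ∑ i ∈ Finset.range (N' + 1), g' i x * φ (Ψ' i) with hqdef
  have hq_smooth : ContDiffOn ℝ (⊤ : ℕ∞) q (Ioo 0 1) := by
    apply ContDiffOn.sub <;>
      exact ContDiffOn.sum fun i _ => ContDiffOn.mul (by first | exact h.smooth i | exact h'.smooth i) contDiffOn_const
  have hq_tendsto : Tendsto q (nhdsWithin 0 (Ioo 0 1)) (nhds (0 : ℝ)) := by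
    have h4 := (φ.continuous.tendsto 0).comp hF
    rw [map_zero] at h4
    refine h4.congr fun x => ?_
    simp [q, Function.comp, map_sub, map_sum, map_smul, smul_eq_mul]
  have hq0 : R.T q = 0 := (R.zero_iff q hq_smooth).mpr ⟨0, hq_tendsto⟩
  have hqrepr : q = ∑ i ∈ Finset.range (N + 1), φ (Ψ i) • g i
      - ∑ i ∈ Finset.range (N' + 1), φ (Ψ' i) • g' i := by
    funext x
    simp [q, Finset.sum_apply, Pi.smul_apply, smul_eq_mul, mul_comm]
  have hTq : ∑ i ∈ Finset.range (N + 1), φ (Ψ i) * R.T (g i) ε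
      - ∑ i ∈ Finset.range (N' + 1), φ (Ψ' i) * R.T (g' i) ε = 0 := by
    rw [hqrepr, map_sub, map_sum, map_sum] at hq0
    simp only [map_smul] at hq0
    have h5 := congrFun hq0 ε
    simpa [Finset.sum_apply, Pi.smul_apply, smul_eq_mul] using h5
  have hfin : φ (∑ i ∈ Finset.range (N + 1), R.T (g i) ε • Ψ i)
      - φ (∑ i ∈ Finset.range (N' + 1), R.T (g' i) ε • Ψ' i) = 0 := by
    simp only [map_sum, map_smul, smul_eq_mul]
    simpa [mul_comm] using hTq
  exact hφ (sub_eq_zero.mp hfin)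
end

section
/- For every f ∈ Asy(W), the limit lim_{ε→0} [f(ε) − Sing(f)(ε)] exists in W. -/
open Filter Set

variable (W : Type*) [AddCommGroup W] [Module ℝ W] [TopologicalSpace W]

/-- `Asy W`: the space of functions `(0,1) → W` admitting a small-`ε`
asymptotic expansion `Σ gᵢ(ε) Ψᵢ` with `gᵢ` smooth with finite order poles at
zero. -/
def Asy : Set (ℝ → W) := {f | ∃ g Ψ, AsympData W f g Ψ}

open Classical in
/-- The singular part operator `Sing`: for `f` with asymptotic expansion
`Σ gᵢ(ε) Ψᵢ` and `N` such that `gₙ → 0` as `ε → 0` for `n ≥ N`, set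
`Sing(f) := Σ_{i=0}^{N} T(gᵢ) Ψᵢ`. -/
noncomputable def SingOp (R : RenormScheme) (f : ℝ → W) : ℝ → W :=
  if h : ∃ p : (ℕ → ℝ → ℝ) × (ℕ → W) × ℕ, AsympData W f p.1 p.2.1 ∧
      ∀ n ≥ p.2.2, Tendsto (p.1 n) (nhdsWithin 0 (Ioo 0 1)) (nhds (0 : ℝ)) then
    fun ε => ∑ i ∈ Finset.range (h.choose.2.2 + 1), R.T (h.choose.1 i) ε • h.choose.2.1 i
  else 0


private lemma tendsto_zpow_nonneg {k : ℤ} (hk : 0 ≤ k) :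
    ∃ c : ℝ, Tendsto (fun ε : ℝ => ε ^ k) (nhdsWithin 0 (Ioo 0 1)) (nhds c) := by
  refine ⟨(0:ℝ) ^ k.toNat, ?_⟩
  have h : (fun ε : ℝ => ε ^ k) = fun ε : ℝ => ε ^ k.toNat := by
    funext ε
    rw [← zpow_natCast, Int.toNat_of_nonneg hk]
  rw [h]
  exact ((continuous_pow k.toNat).tendsto 0).mono_left nhdsWithin_le_nhds

private lemma tendsto_scalar_of_smul {W : Type*} [AddCommGroup W] [Module ℝ W]
    [TopologicalSpace W] [IsTopologicalAddGroup W] [ContinuousSMul ℝ W] [T2Space W]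
    [LocallyConvexSpace ℝ W] {t : ℝ → ℝ} {v : W} (hv : v ≠ 0)
    (h : Tendsto (fun ε => t ε • v) (nhdsWithin 0 (Ioo 0 1)) (nhds (0 : W))) :
    Tendsto t (nhdsWithin 0 (Ioo 0 1)) (nhds (0 : ℝ)) := by
  obtain ⟨φ, hφ⟩ := SeparatingDual.exists_eq_one (R := ℝ) hv
  have h2 := (φ.continuous.tendsto 0).comp h
  rw [map_zero] at h2
  have h3 : ∀ ε, φ (t ε • v) = t ε := by
    intro ε; rw [map_smul, hφ, smul_eq_mul, mul_one]
  exact h2.congr h3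

private lemma coeff_tendsto_zero {W : Type*} [AddCommGroup W] [Module ℝ W] [TopologicalSpace W]
    [IsTopologicalAddGroup W] [ContinuousSMul ℝ W] [T2Space W] [LocallyConvexSpace ℝ W]
    {f : ℝ → W} {G : ℕ → ℝ → ℝ} {P : ℕ → W} {d : ℕ → ℤ} (hmono : Monotone d)
    (hexp : ∀ n, Tendsto (fun ε : ℝ => (ε ^ (-(d n)) : ℝ) •
      (f ε - ∑ i ∈ Finset.range (n + 1), G i ε • P i)) (nhdsWithin 0 (Ioo 0 1)) (nhds (0 : W)))
    {m : ℕ} (hm : 0 ≤ d m) (hP : P (m + 1) ≠ 0) :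
    Tendsto (G (m + 1)) (nhdsWithin 0 (Ioo 0 1)) (nhds (0 : ℝ)) := by
  obtain ⟨c1, hc1⟩ := tendsto_zpow_nonneg (sub_nonneg.mpr (hmono (Nat.le_succ m)))
  have hA : Tendsto (fun ε : ℝ => (ε ^ (-(d m)) : ℝ) •
      (f ε - ∑ i ∈ Finset.range (m + 1 + 1), G i ε • P i)) (nhdsWithin 0 (Ioo 0 1))
      (nhds (0 : W)) := by
    have h2 := hc1.smul (hexp (m + 1))
    rw [smul_zero] at h2
    refine h2.congr' ?_
    filter_upwards [self_mem_nhdsWithin] with ε hε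
    rw [smul_smul, ← zpow_add₀ (ne_of_gt hε.1)]
    have he : d (m + 1) - d m + -(d (m + 1)) = -(d m) := by ring
    rw [he]
  have hC := (hexp m).sub hA
  rw [sub_zero] at hC
  have hC' : Tendsto (fun ε : ℝ => ((ε ^ (-(d m)) : ℝ) * G (m + 1) ε) • P (m + 1))
      (nhdsWithin 0 (Ioo 0 1)) (nhds (0 : W)) := by
    refine hC.congr fun ε => ?_
    have hs : ∑ i ∈ Finset.range (m + 1 + 1), G i ε • P i =
        (∑ i ∈ Finset.range (m + 1), G i ε • P i) + G (m + 1) ε • P (m + 1) :=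
      Finset.sum_range_succ _ _
    rw [← smul_sub, hs]
    have hs2 : (f ε - ∑ i ∈ Finset.range (m + 1), G i ε • P i) -
        (f ε - ((∑ i ∈ Finset.range (m + 1), G i ε • P i) + G (m + 1) ε • P (m + 1))) =
        G (m + 1) ε • P (m + 1) := by abel
    rw [hs2, smul_smul]
  have h4 := tendsto_scalar_of_smul hP hC'
  obtain ⟨c2, hc2⟩ := tendsto_zpow_nonneg hm
  have h5 := hc2.mul h4
  rw [mul_zero] at h5
  refine h5.congr' ?_
  filter_upwards [self_mem_nhdsWithin] with ε hε
  rw [← mul_assoc, ← zpow_add₀ (ne_of_gt hε.1), add_neg_cancel, zpow_zero, one_mul]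

private lemma main_conv {W : Type*} [AddCommGroup W] [Module ℝ W] [TopologicalSpace W]
    [IsTopologicalAddGroup W] [ContinuousSMul ℝ W]
    (R : RenormScheme) (f : ℝ → W) (G : ℕ → ℝ → ℝ) (P : ℕ → W) (M : ℕ)
    (hA : AsympData W f G P)
    (hM : ∀ n ≥ M, Tendsto (G n) (nhdsWithin 0 (Ioo 0 1)) (nhds (0 : ℝ))) :
    ∃ a : W, Tendsto (fun ε => f ε - ∑ i ∈ Finset.range (M + 1), R.T (G i) ε • P i)
      (nhdsWithin 0 (Ioo 0 1)) (nhds a) := by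
  obtain ⟨d, hmono, hd, hexp⟩ := hA.expansion
  obtain ⟨K0, hK0⟩ := (hd.eventually_ge_atTop 0).exists
  set K := max M K0 with hK
  have hdK : 0 ≤ d K := le_trans hK0 (hmono (le_max_right _ _))
  have hMK : M ≤ K := le_max_left _ _
  obtain ⟨c0, hc0⟩ := tendsto_zpow_nonneg hdK
  have h1 : Tendsto (fun ε => f ε - ∑ i ∈ Finset.range (K + 1), G i ε • P i)
      (nhdsWithin 0 (Ioo 0 1)) (nhds (0 : W)) := by
    have h2 := hc0.smul (hexp K)
    rw [smul_zero] at h2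
    refine h2.congr' ?_
    filter_upwards [self_mem_nhdsWithin] with ε hε
    rw [smul_smul, ← zpow_add₀ (ne_of_gt hε.1), add_neg_cancel, zpow_zero, one_smul]
  choose c hc using fun i => R.compl (G i) (hA.smooth i)
  refine ⟨∑ i ∈ Finset.range (M + 1), c i • P i, ?_⟩
  have h2 : Tendsto (fun ε => ∑ i ∈ Finset.range (M + 1), (G i ε - R.T (G i) ε) • P i)
      (nhdsWithin 0 (Ioo 0 1)) (nhds (∑ i ∈ Finset.range (M + 1), c i • P i)) :=
    tendsto_finset_sum _ fun i _ => (hc i).smul_const (P i)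
  have h3 : Tendsto (fun ε => ∑ i ∈ Finset.Ico (M + 1) (K + 1), G i ε • P i)
      (nhdsWithin 0 (Ioo 0 1)) (nhds (0 : W)) := by
    have h3' : Tendsto (fun ε => ∑ i ∈ Finset.Ico (M + 1) (K + 1), G i ε • P i)
        (nhdsWithin 0 (Ioo 0 1))
        (nhds (∑ i ∈ Finset.Ico (M + 1) (K + 1), (0 : ℝ) • P i)) :=
      tendsto_finset_sum _ fun i hi =>
        (hM i (by have := (Finset.mem_Ico.mp hi).1; omega)).smul_const (P i)
    simpa using h3'
  have htot := (h1.add h2).add h3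
  rw [add_zero, zero_add] at htot
  refine htot.congr fun ε => ?_
  have hsplit : ∑ i ∈ Finset.range (K + 1), G i ε • P i =
      (∑ i ∈ Finset.range (M + 1), G i ε • P i) +
        ∑ i ∈ Finset.Ico (M + 1) (K + 1), G i ε • P i :=
    (Finset.sum_range_add_sum_Ico _ (by omega)).symm
  have hsub : ∑ i ∈ Finset.range (M + 1), (G i ε - R.T (G i) ε) • P i =
      (∑ i ∈ Finset.range (M + 1), G i ε • P i) -
        ∑ i ∈ Finset.range (M + 1), R.T (G i) ε • P i := by
    rw [← Finset.sum_sub_distrib]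
    exact Finset.sum_congr rfl fun i _ => sub_smul _ _ _
  rw [hsub, hsplit]
  abel

/-- **Subtracting the singular part yields convergence.** For every
`f ∈ Asy(W)`, the limit `lim_{ε→0} [f(ε) − Sing(f)(ε)]` exists in `W`. -/
theorem statement_5 (W : Type*) [AddCommGroup W] [Module ℝ W] [TopologicalSpace W]
    [IsTopologicalAddGroup W] [ContinuousSMul ℝ W] [T2Space W] [LocallyConvexSpace ℝ W]
    (R : RenormScheme) (f : ℝ → W) (hf : f ∈ Asy W) :
    ∃ a : W, Tendsto (fun ε => f ε - SingOp W R f ε)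
      (nhdsWithin 0 (Ioo 0 1)) (nhds a) := by
  classical
  obtain ⟨g, Ψ, hA⟩ := hf
  obtain ⟨d, hmono, hd, hexp⟩ := hA.expansion
  set g' : ℕ → ℝ → ℝ := fun i => if Ψ i = 0 then 0 else g i with hg'
  have hsum : ∀ n ε, ∑ i ∈ Finset.range n, g' i ε • Ψ i =
      ∑ i ∈ Finset.range n, g i ε • Ψ i := by
    intro n ε
    refine Finset.sum_congr rfl fun i _ => ?_
    by_cases h : Ψ i = 0 <;> simp [g', h]
  have hA' : AsympData W f g' Ψ := by
    refine ⟨fun i => ?_, fun i => ?_, ⟨d, hmono, hd, fun n => ?_⟩⟩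
    · by_cases h : Ψ i = 0
      · simp only [g', h, if_true]; exact contDiffOn_const
      · simpa [g', h] using hA.smooth i
    · by_cases h : Ψ i = 0
      · exact ⟨0, by simpa [g', h] using (tendsto_const_nhds :
          Tendsto (fun _ : ℝ => (0:ℝ)) (nhdsWithin 0 (Ioo 0 1)) (nhds 0))⟩
      · obtain ⟨k, hk⟩ := hA.pole i
        exact ⟨k, by simpa [g', h] using hk⟩
    · simpa [hsum] using hexp n
  obtain ⟨N0, hN0⟩ := (hd.eventually_ge_atTop 0).exists
  have hcond : ∃ p : (ℕ → ℝ → ℝ) × (ℕ → W) × ℕ, AsympData W f p.1 p.2.1 ∧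
      ∀ n ≥ p.2.2, Tendsto (p.1 n) (nhdsWithin 0 (Ioo 0 1)) (nhds (0 : ℝ)) := by
    refine ⟨(g', Ψ, N0 + 1), hA', fun n hn => ?_⟩
    have hn' : N0 + 1 ≤ n := hn
    by_cases h : Ψ n = 0
    · have hg0 : (g', Ψ, N0 + 1).1 n = 0 := by simp [g', h]
      rw [hg0]
      exact tendsto_const_nhds
    · obtain ⟨m, rfl⟩ : ∃ m, n = m + 1 := ⟨n - 1, by omega⟩
      have hexp' : ∀ k, Tendsto (fun ε : ℝ => (ε ^ (-(d k)) : ℝ) •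
          (f ε - ∑ i ∈ Finset.range (k + 1), g' i ε • Ψ i)) (nhdsWithin 0 (Ioo 0 1))
          (nhds (0 : W)) := fun k => by simpa [hsum] using hexp k
      have hdm : 0 ≤ d m := le_trans hN0 (hmono (by omega))
      have := coeff_tendsto_zero hmono hexp' hdm h
      simpa [g', h] using this
  rw [SingOp, dif_pos hcond]
  obtain ⟨hA2, hM2⟩ := hcond.choose_spec
  exact main_conv R f _ _ _ hA2 hM2
end

section
/- Let Γ be a connected stable graph of genus i with j legs and at least one edge. Then every vertex v of Γ satisfies (g_v, |v|) < (i, j) in the lexicographic order (g_v < i, or g_v = i and |v| < j). -/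
open Filter Set

/-- A stable graph: a finite set of half-edges, partitioned into (nonempty) vertices
via the equivalence relation `vert`, each vertex carrying a genus (encoded as a
function on half-edges constant on vertices), together with an involution `edgeInv`
of the half-edges whose fixed points are the legs and whose 2-cycles are the edges.
Genus-zero vertices are required to be at least trivalent. -/
structure StableGraph where
  H : Type
  finH : Finite H
  vert : H → H → Prop
  vert_equiv : Equivalence vert
  genus : H → ℕ
  genus_const : ∀ a b, vert a b → genus a = genus b
  edgeInv : H → H
  invol : ∀ h, edgeInv (edgeInv h) = h
  stable : ∀ h, genus h = 0 → 3 ≤ Nat.card {h' // vert h h'}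

namespace StableGraph

variable (Γ : StableGraph)

/-- A half-edge is a leg if it is a fixed point of the edge involution. -/
def IsLeg (h : Γ.H) : Prop := Γ.edgeInv h = h

noncomputable def numLegs : ℕ := Nat.card {h : Γ.H // Γ.IsLeg h}

/-- The number of half-edges at the vertex of `h`. -/
noncomputable def valence (h : Γ.H) : ℕ := Nat.card {h' : Γ.H // Γ.vert h h'}

noncomputable def numEdges : ℕ := Nat.card {h : Γ.H // ¬ Γ.IsLeg h} / 2

noncomputable def numVertices : ℕ := Nat.card (Quot Γ.vert)

/-- Two half-edges are adjacent if they share a vertex or form an edge. -/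
def adj (a b : Γ.H) : Prop := Γ.vert a b ∨ Γ.edgeInv a = b

noncomputable def numComponents : ℕ := Nat.card (Quot (Relation.ReflTransGen Γ.adj))

def Connected : Prop := Γ.numComponents = 1

def sameComp (a b : Γ.H) : Prop := Relation.ReflTransGen Γ.adj a b

noncomputable def sumGenus : ℕ :=
  ∑ᶠ v : Quot Γ.vert, Quot.lift Γ.genus (fun a b h => Γ.genus_const a b h) v

/-- The genus of a stable graph: `dim H₁(Γ;ℚ) + Σ_v g_v`, where
`dim H₁ = #E − #V + #components`. -/
noncomputable def totalGenus : ℤ :=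
  (Γ.numEdges : ℤ) - Γ.numVertices + Γ.numComponents + Γ.sumGenus

/-- A subgraph: a set of edges, encoded as a set of half-edges closed under the
edge involution and containing no legs. -/
structure Subgraph where
  S : Set Γ.H
  closed : ∀ h ∈ S, Γ.edgeInv h ∈ S
  noLegs : ∀ h ∈ S, ¬ Γ.IsLeg h

variable {Γ}

/-- A subgraph is proper if it is a proper subset of the set of edges. -/
def Subgraph.Proper (γ : Γ.Subgraph) : Prop := γ.S ⊂ {h | ¬ Γ.IsLeg h}

def emptySub (Γ : StableGraph) : Γ.Subgraph :=
  ⟨∅, by simp, by simp⟩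

def fullSub (Γ : StableGraph) : Γ.Subgraph :=
  ⟨{h | ¬ Γ.IsLeg h}, by
    intro h hh hc
    apply hh
    have : Γ.edgeInv (Γ.edgeInv h) = Γ.edgeInv h := hc
    rw [Γ.invol] at this
    exact this.symm, fun _ hh => hh⟩

end StableGraph

/-! Since `Γ` is connected, `#V ≤ #E + 1`, so `i = (#E - #V + 1) + Σ g_w ≥ g_v`. If `g_v = i`,
then `#V = #E + 1` and every other vertex has genus `0`, hence is at least trivalent. Counting
half-edges, `|v| + 3 (#V - 1) ≤ #legs + 2 #E`, i.e. `|v| ≤ #legs - #E < #legs`. -/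

namespace StableGraph

variable (Γ : StableGraph)

instance : Finite Γ.H := Γ.finH

instance : Finite (Quot Γ.vert) := Finite.of_surjective _ Quot.mk_surjective

theorem card_eq_numLegs_add_two_mul_numEdges :
    Nat.card Γ.H = Γ.numLegs + 2 * Γ.numEdges := by
  classical
  have := Fintype.ofFinite Γ.H
  -- the non-legs are the points moved by the involution `edgeInv`, so they come in pairs
  have hmod : Nat.card Γ.H ≡ Γ.numLegs [MOD 2] := by
    have := Equiv.Perm.card_fixedPoints_modEq (p := 2) (n := 1)
      (f := (Γ.edgeInv : Function.End Γ.H)) (funext Γ.invol)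
    rwa [← Nat.card_eq_fintype_card, ← Nat.card_eq_fintype_card] at this
  have hsplit : Nat.card Γ.H = Γ.numLegs + Nat.card {h : Γ.H // ¬ Γ.IsLeg h} := by
    rw [numLegs, ← Nat.card_sum, Nat.card_congr (Equiv.sumCompl _)]
  rw [numEdges]
  have := (Nat.modEq_iff_dvd' (by omega)).1 hmod.symm
  omega

def toSimpleGraph : SimpleGraph (Quot Γ.vert) where
  Adj v w := v ≠ w ∧ ∃ x, Quot.mk _ x = v ∧ Quot.mk _ (Γ.edgeInv x) = w
  symm := ⟨by
    rintro v w ⟨hne, x, rfl, rfl⟩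
    exact ⟨hne.symm, Γ.edgeInv x, rfl, by rw [Γ.invol]⟩⟩
  loopless := ⟨fun _ h => h.1 rfl⟩

variable {Γ}

theorem mk_eq_mk_iff {a b : Γ.H} : Quot.mk Γ.vert a = Quot.mk _ b ↔ Γ.vert a b :=
  Quot.eq.trans Γ.vert_equiv.eqvGen_iff

theorem toSimpleGraph_reachable_of_adj {a b : Γ.H} (hab : Γ.adj a b) :
    Γ.toSimpleGraph.Reachable (Quot.mk _ a) (Quot.mk _ b) := by
  rcases hab with hv | rfl
  · rw [Quot.sound hv]
  · by_cases heq : Quot.mk Γ.vert a = Quot.mk _ (Γ.edgeInv a)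
    · rw [heq]
    · exact SimpleGraph.Adj.reachable (G := Γ.toSimpleGraph) ⟨heq, a, rfl, rfl⟩

theorem toSimpleGraph_reachable_of_sameComp {a b : Γ.H} (hab : Γ.sameComp a b) :
    Γ.toSimpleGraph.Reachable (Quot.mk _ a) (Quot.mk _ b) := by
  induction hab with
  | refl => rfl
  | tail _ hbc ih => exact ih.trans (toSimpleGraph_reachable_of_adj hbc)

theorem Connected.toSimpleGraph (hΓ : Γ.Connected) : Γ.toSimpleGraph.Connected := by
  obtain ⟨c, hc⟩ := Nat.card_eq_one_iff_exists.1 hΓ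
  obtain ⟨x, -⟩ := Quot.exists_rep c
  have : Nonempty (Quot Γ.vert) := ⟨Quot.mk _ x⟩
  refine SimpleGraph.connected_iff_exists_forall_reachable _ |>.2 ⟨Quot.mk _ x, ?_⟩
  rintro ⟨b⟩
  let comp : Quot Γ.sameComp → Γ.toSimpleGraph.ConnectedComponent :=
    Quot.lift (fun a => Γ.toSimpleGraph.connectedComponentMk (Quot.mk _ a))
      fun _ _ h => SimpleGraph.ConnectedComponent.sound (toSimpleGraph_reachable_of_sameComp h)
  exact SimpleGraph.ConnectedComponent.exact
    (congrArg comp ((hc (Quot.mk _ x)).trans (hc (Quot.mk _ b)).symm))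

theorem card_edgeSet_toSimpleGraph_le : Nat.card Γ.toSimpleGraph.edgeSet ≤ Γ.numEdges := by
  classical
  have := Fintype.ofFinite Γ.H
  have := Fintype.ofFinite (Quot Γ.vert)
  let dart (x : {x : Γ.H // Quot.mk Γ.vert x ≠ Quot.mk _ (Γ.edgeInv x)}) :
      Γ.toSimpleGraph.Dart :=
    ⟨(Quot.mk _ x.1, Quot.mk _ (Γ.edgeInv x)), x.2, x, rfl, rfl⟩
  have hdart : Function.Surjective dart := by
    rintro ⟨⟨v, w⟩, hne, x, hx, hσx⟩
    exact ⟨⟨x, hx ▸ hσx ▸ hne⟩, by simp only [dart, hx, hσx]⟩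
  have hleg : Nat.card {x : Γ.H // Quot.mk Γ.vert x ≠ Quot.mk _ (Γ.edgeInv x)} ≤
      Nat.card {x : Γ.H // ¬ Γ.IsLeg x} :=
    Nat.card_le_card_of_injective _
      (Subtype.impEmbedding _ _ fun x hx hleg => hx (congrArg _ hleg.symm)).injective
  have := Nat.card_le_card_of_surjective dart hdart
  rw [Nat.card_eq_fintype_card, SimpleGraph.dart_card_eq_twice_card_edges] at this
  rw [Nat.card_eq_fintype_card, ← SimpleGraph.edgeFinset_card, numEdges]
  omega

theorem numVertices_le_numEdges_add_one (hΓ : Γ.Connected) :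
    Γ.numVertices ≤ Γ.numEdges + 1 :=
  hΓ.toSimpleGraph.card_vert_le_card_edgeSet_add_one.trans
    (Nat.add_le_add_right card_edgeSet_toSimpleGraph_le 1)

theorem genus_le_sumGenus (a : Γ.H) : Γ.genus a ≤ Γ.sumGenus := by
  have := Fintype.ofFinite (Quot Γ.vert)
  rw [sumGenus, finsum_eq_sum_of_fintype]
  exact Finset.single_le_sum (f := Quot.lift Γ.genus Γ.genus_const) (fun _ _ => Nat.zero_le _)
    (Finset.mem_univ (Quot.mk _ a))

theorem genus_add_genus_le_sumGenus {a b : Γ.H} (hab : ¬ Γ.vert a b) :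
    Γ.genus a + Γ.genus b ≤ Γ.sumGenus := by
  have := Fintype.ofFinite (Quot Γ.vert)
  rw [sumGenus, finsum_eq_sum_of_fintype]
  exact Finset.add_le_sum (f := Quot.lift Γ.genus Γ.genus_const) (fun _ _ => Nat.zero_le _)
    (Finset.mem_univ (Quot.mk _ a)) (Finset.mem_univ (Quot.mk _ b)) (mt mk_eq_mk_iff.1 hab)

theorem valence_eq_card_fiber (a : Γ.H) :
    Γ.valence a = Nat.card {x // Quot.mk Γ.vert x = Quot.mk _ a} :=
  Nat.card_congr <| Equiv.subtypeEquivRight fun _ =>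
    mk_eq_mk_iff.trans ⟨Γ.vert_equiv.symm, Γ.vert_equiv.symm⟩ |>.symm

theorem valence_add_three_mul_le_card (a : Γ.H)
    (hstab : ∀ x, ¬ Γ.vert a x → 3 ≤ Γ.valence x) :
    Γ.valence a + 3 * (Γ.numVertices - 1) ≤ Nat.card Γ.H := by
  classical
  have := Fintype.ofFinite (Quot Γ.vert)
  have hcard : Nat.card Γ.H = ∑ v, Nat.card {x // Quot.mk Γ.vert x = v} := by
    rw [← Nat.card_sigma, Nat.card_congr (Equiv.sigmaFiberEquiv _)]
  have hothers :
      ∀ v ∈ Finset.univ.erase (Quot.mk _ a), 3 ≤ Nat.card {x // Quot.mk Γ.vert x = v} := by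
    rintro ⟨x⟩ hx
    rw [← valence_eq_card_fiber]
    exact hstab x (mt mk_eq_mk_iff.2 (Finset.ne_of_mem_erase hx).symm)
  have hsum := Finset.card_nsmul_le_sum _ _ _ hothers
  rw [Finset.card_erase_of_mem (Finset.mem_univ _), Finset.card_univ, smul_eq_mul,
    ← Nat.card_eq_fintype_card] at hsum
  rw [hcard, ← Finset.add_sum_erase _ _ (Finset.mem_univ (Quot.mk _ a)), valence_eq_card_fiber,
    numVertices, mul_comm]
  exact Nat.add_le_add_left hsum _

end StableGraph

open StableGraph in
/-- If `Γ` is a connected stable graph of genus `i` with `j` legs and at least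
one edge, then every vertex `v` of `Γ` satisfies `(g_v, |v|) < (i, j)` in the
lexicographic order. (Here the vertex of the half-edge `h` has genus
`Γ.genus h` and valence `Γ.valence h`.) -/
theorem statement_10 (Γ : StableGraph) (i j : ℕ)
    (hconn : Γ.Connected) (hg : Γ.totalGenus = (i : ℤ)) (hl : Γ.numLegs = j)
    (he : 1 ≤ Γ.numEdges) (h : Γ.H) :
    Γ.genus h < i ∨ (Γ.genus h = i ∧ Γ.valence h < j) := by
  have hVE := numVertices_le_numEdges_add_one hconn
  have hgS := genus_le_sumGenus h
  rw [totalGenus, show Γ.numComponents = 1 from hconn] at hg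
  obtain hlt | rfl : Γ.genus h < i ∨ Γ.genus h = i := by omega
  · exact Or.inl hlt
  have hstab : ∀ x, ¬ Γ.vert h x → 3 ≤ Γ.valence x := fun x hx =>
    Γ.stable x (by have := genus_add_genus_le_sumGenus hx; omega)
  have hval := valence_add_three_mul_le_card h hstab
  have hcard := Γ.card_eq_numLegs_add_two_mul_numEdges
  exact Or.inr ⟨rfl, by omega⟩
end
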